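/- Let α ∈ [1,∞), r > 0, and let X be a random vector in ℝ^d with ‖X‖ ≤ r almost surely. Then for every θ ∈ ℝ^d with ‖θ‖ ≤ r: (i) ‖E[σ(⟨θ, X⟩)^{1-1/α}·σ(-⟨θ, X⟩)·X] - E[X]‖ ≤ (1 - σ(-r²)²)·E[‖X‖]; and consequently (ii) if E[X] ≠ 0 and 1 - σ(-r²)² < ‖E[X]‖ / E[‖X‖], then ‖E[σ(⟨θ, X⟩)^{1-1/α}·σ(-⟨θ, X⟩)·X]‖ ≥ ‖E[X]‖ - (1 - σ(-r²)²)·E[‖X‖] > 0, i.e., this vector (which equals minus the gradient of the expected α-risk under the symmetry assumption of the logistic-regression model) never vanishes for θ in the ball of radius r. -/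

import Mathlib

open scoped RealInnerProductSpace
open MeasureTheory

/-!
Write `w = σ(z)^β σ(-z)` with `z = ⟪θ, X⟫` and `β = 1 - 1/α ∈ [0, 1]`. Cauchy–Schwarz gives
`|z| ≤ r²`, and since `σ ≤ 1` and `β ≤ 1` we have `σ(z)^β ≥ σ(z) ≥ σ(-r²)`; hence
`σ(-r²)² ≤ w ≤ 1`, i.e. `|w - 1| ≤ 1 - σ(-r²)²` almost surely. Integrating
`‖(w - 1) • X‖ ≤ (1 - σ(-r²)²) ‖X‖` gives (i), and (ii) is the reverse triangle inequality.
-/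

noncomputable def sigmoid (z : ℝ) : ℝ := 1 / (1 + Real.exp (-z))

lemma sigmoid_eq_real_sigmoid : sigmoid = Real.sigmoid := funext fun _ => one_div _

section LogisticWeight

variable {β s z : ℝ}

lemma sigmoid_rpow_mul_sigmoid_neg_le_one (hβ : 0 ≤ β) (z : ℝ) :
    sigmoid z ^ β * sigmoid (-z) ≤ 1 := by
  rw [sigmoid_eq_real_sigmoid]
  exact mul_le_one₀ (Real.rpow_le_one (Real.sigmoid_nonneg z) (Real.sigmoid_le_one z) hβ)
    (Real.sigmoid_nonneg _) (Real.sigmoid_le_one _)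

lemma sigmoid_neg_sq_le_sigmoid_rpow_mul_sigmoid_neg (hβ : β ≤ 1) (hz : |z| ≤ s) :
    sigmoid (-s) ^ 2 ≤ sigmoid z ^ β * sigmoid (-z) := by
  rw [sigmoid_eq_real_sigmoid]
  obtain ⟨hzl, hzu⟩ := abs_le.mp hz
  have hz_le_rpow : Real.sigmoid z ≤ Real.sigmoid z ^ β := by
    simpa using Real.rpow_le_rpow_of_exponent_ge (Real.sigmoid_pos z) (Real.sigmoid_le_one z) hβ
  rw [sq]
  exact mul_le_mul ((Real.sigmoid_le (by linarith)).trans hz_le_rpow)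
    (Real.sigmoid_le (by linarith)) (Real.sigmoid_nonneg _)
    ((Real.sigmoid_nonneg z).trans hz_le_rpow)

lemma abs_sigmoid_rpow_mul_sigmoid_neg_sub_one_le (hβ₀ : 0 ≤ β) (hβ₁ : β ≤ 1) (hz : |z| ≤ s) :
    |sigmoid z ^ β * sigmoid (-z) - 1| ≤ 1 - sigmoid (-s) ^ 2 := by
  rw [abs_of_nonpos (sub_nonpos.mpr (sigmoid_rpow_mul_sigmoid_neg_le_one hβ₀ z))]
  linarith [sigmoid_neg_sq_le_sigmoid_rpow_mul_sigmoid_neg hβ₁ hz]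

end LogisticWeight

theorem norm_integral_smul_sub_integral_le {Ω E : Type*} [MeasurableSpace Ω] {μ : Measure Ω}
    [NormedAddCommGroup E] [NormedSpace ℝ E] {w : Ω → ℝ} {X : Ω → E} {c : ℝ}
    (hX : Integrable X μ) (hw : AEStronglyMeasurable w μ) (hwc : ∀ᵐ ω ∂μ, |w ω - 1| ≤ c) :
    ‖∫ ω, w ω • X ω ∂μ - ∫ ω, X ω ∂μ‖ ≤ c * ∫ ω, ‖X ω‖ ∂μ := by
  have hwX : Integrable (fun ω => w ω • X ω) μ := by
    refine hX.bdd_smul (c + 1) hw ?_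
    filter_upwards [hwc] with ω hω
    rw [Real.norm_eq_abs]
    linarith [abs_sub_abs_le_abs_sub (w ω) 1, abs_one (α := ℝ)]
  rw [← integral_sub hwX hX, ← integral_const_mul]
  refine norm_integral_le_of_norm_le (hX.norm.const_mul c) ?_
  filter_upwards [hwc] with ω hω
  rw [show w ω • X ω - X ω = (w ω - 1) • X ω by rw [sub_smul, one_smul], norm_smul,
    Real.norm_eq_abs]
  exact mul_le_mul_of_nonneg_right hω (norm_nonneg _)

theorem weighted_mean_gradient_bound_general
    {Ω : Type*} [MeasurableSpace Ω] (μ : Measure Ω) [IsProbabilityMeasure μ]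
    (d : ℕ) (α r : ℝ) (hα : 1 ≤ α)
    (X : Ω → EuclideanSpace ℝ (Fin d)) (hXm : Measurable X)
    (hXr : ∀ᵐ ω ∂μ, ‖X ω‖ ≤ r)
    (θ : EuclideanSpace ℝ (Fin d)) (hθ : ‖θ‖ ≤ r) :
    ‖(∫ ω, (sigmoid ⟪θ, X ω⟫ ^ (1 - 1/α) * sigmoid (-⟪θ, X ω⟫)) • X ω ∂μ)
        - ∫ ω, X ω ∂μ‖
      ≤ (1 - sigmoid (-(r^2)) ^ 2) * ∫ ω, ‖X ω‖ ∂μ ∧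
    ((∫ ω, X ω ∂μ) ≠ 0 →
      1 - sigmoid (-(r^2)) ^ 2 < ‖∫ ω, X ω ∂μ‖ / ∫ ω, ‖X ω‖ ∂μ →
      ‖∫ ω, (sigmoid ⟪θ, X ω⟫ ^ (1 - 1/α) * sigmoid (-⟪θ, X ω⟫)) • X ω ∂μ‖
          ≥ ‖∫ ω, X ω ∂μ‖ - (1 - sigmoid (-(r^2)) ^ 2) * ∫ ω, ‖X ω‖ ∂μ ∧
        0 < ‖∫ ω, X ω ∂μ‖ - (1 - sigmoid (-(r^2)) ^ 2) * ∫ ω, ‖X ω‖ ∂μ) := by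
  have hβ₀ : 0 ≤ 1 - 1 / α := sub_nonneg.mpr ((div_le_one (by linarith)).mpr hα)
  have hβ₁ : 1 - 1 / α ≤ 1 := sub_le_self _ (by positivity)
  have hw : ∀ᵐ ω ∂μ,
      |sigmoid ⟪θ, X ω⟫ ^ (1 - 1/α) * sigmoid (-⟪θ, X ω⟫) - 1| ≤ 1 - sigmoid (-(r^2)) ^ 2 := by
    filter_upwards [hXr] with ω hω
    refine abs_sigmoid_rpow_mul_sigmoid_neg_sub_one_le hβ₀ hβ₁ ?_
    calc |⟪θ, X ω⟫| ≤ ‖θ‖ * ‖X ω‖ := abs_real_inner_le_norm θ (X ω)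
      _ ≤ r ^ 2 := by rw [sq]; exact mul_le_mul hθ hω (norm_nonneg _) ((norm_nonneg θ).trans hθ)
  have hw_meas : Measurable fun ω => sigmoid ⟪θ, X ω⟫ ^ (1 - 1/α) * sigmoid (-⟪θ, X ω⟫) := by
    have hg : Continuous fun z => sigmoid z ^ (1 - 1/α) * sigmoid (-z) := by
      rw [sigmoid_eq_real_sigmoid]; fun_prop
    exact hg.measurable.comp (measurable_const.inner hXm)
  have hX : Integrable X μ := .of_bound hXm.aestronglyMeasurable r hXr
  have hdeviation := norm_integral_smul_sub_integral_le hX hw_meas.aestronglyMeasurable hw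
  refine ⟨hdeviation, fun hmean hlt => ?_⟩
  have hnorm_pos : 0 < ∫ ω, ‖X ω‖ ∂μ :=
    (norm_pos_iff.mpr hmean).trans_le (norm_integral_le_integral_norm X)
  have hgap := (lt_div_iff₀ hnorm_pos).mp hlt
  have hreverse := norm_sub_norm_le (∫ ω, X ω ∂μ)
    (∫ ω, (sigmoid ⟪θ, X ω⟫ ^ (1 - 1/α) * sigmoid (-⟪θ, X ω⟫)) • X ω ∂μ)
  rw [norm_sub_rev] at hreverse
  constructor <;> linarith

/-- Let `α ∈ [1,∞)`, `r > 0`, and let `X` be a random vector in `ℝ^d` with `‖X‖ ≤ r`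
a.s. Then for `‖θ‖ ≤ r`:
(i) `‖E[σ(⟪θ,X⟫)^{1-1/α}·σ(-⟪θ,X⟫)·X] - E[X]‖ ≤ (1-σ(-r²)²)·E[‖X‖]`; and
(ii) if `E[X] ≠ 0` and `1-σ(-r²)² < ‖E[X]‖/E[‖X‖]`, then
`‖E[σ(⟪θ,X⟫)^{1-1/α}·σ(-⟪θ,X⟫)·X]‖ ≥ ‖E[X]‖ - (1-σ(-r²)²)·E[‖X‖] > 0`, i.e. this
vector (minus the gradient of the expected `α`-risk under the symmetry assumption)
never vanishes on the ball of radius `r`. -/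
theorem weighted_mean_gradient_bound
    {Ω : Type*} [MeasurableSpace Ω] (μ : Measure Ω) [IsProbabilityMeasure μ]
    (d : ℕ) (α r : ℝ) (hα : 1 ≤ α) (hr : 0 < r)
    (X : Ω → EuclideanSpace ℝ (Fin d)) (hXm : Measurable X)
    (hXr : ∀ᵐ ω ∂μ, ‖X ω‖ ≤ r)
    (θ : EuclideanSpace ℝ (Fin d)) (hθ : ‖θ‖ ≤ r) :
    ‖(∫ ω, (sigmoid ⟪θ, X ω⟫ ^ (1 - 1/α) * sigmoid (-⟪θ, X ω⟫)) • X ω ∂μ)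
        - ∫ ω, X ω ∂μ‖
      ≤ (1 - sigmoid (-(r^2)) ^ 2) * ∫ ω, ‖X ω‖ ∂μ ∧
    ((∫ ω, X ω ∂μ) ≠ 0 →
      1 - sigmoid (-(r^2)) ^ 2 < ‖∫ ω, X ω ∂μ‖ / ∫ ω, ‖X ω‖ ∂μ →
      ‖∫ ω, (sigmoid ⟪θ, X ω⟫ ^ (1 - 1/α) * sigmoid (-⟪θ, X ω⟫)) • X ω ∂μ‖
          ≥ ‖∫ ω, X ω ∂μ‖ - (1 - sigmoid (-(r^2)) ^ 2) * ∫ ω, ‖X ω‖ ∂μ ∧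
        0 < ‖∫ ω, X ω ∂μ‖ - (1 - sigmoid (-(r^2)) ^ 2) * ∫ ω, ‖X ω‖ ∂μ) :=
  weighted_mean_gradient_bound_general μ d α r hα X hXm hXr θ hθ
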